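/- For the driven qLN setting, the substitution k = K·det(A) transforms the condition ∂₁((-A₁₂∂₁k + A₁₁∂₂k)/det A) = 0 into the hyperbolic PDE A₁₂·∂₁₁K - A₁₁·∂₁₂K - (3/2)·∂₂A₁₁·∂₁K = 0. -/

import Mathlib

/-- Partial derivative with respect to the first variable. -/
noncomputable def pr (f : ℝ → ℝ → ℝ) (r w : ℝ) : ℝ := deriv (fun x => f x w) r

/-- Partial derivative with respect to the second variable. -/
noncomputable def pw (f : ℝ → ℝ → ℝ) (r w : ℝ) : ℝ := deriv (fun y => f r y) w


lemma slice1 {K : ℝ → ℝ → ℝ} (hK : ContDiff ℝ (⊤ : ℕ∞) fun p : ℝ × ℝ => K p.1 p.2) (r w : ℝ) :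
    HasDerivAt (fun x => K x w) (fderiv ℝ (fun p : ℝ × ℝ => K p.1 p.2) (r, w) (1, 0)) r := by
  have h1 : HasDerivAt (fun x : ℝ => (x, w)) ((1 : ℝ), (0 : ℝ)) r :=
    (hasDerivAt_id r).prodMk (hasDerivAt_const r w)
  exact ((hK.differentiable (by simp) (r, w)).hasFDerivAt.comp_hasDerivAt r h1)

lemma slice2 {K : ℝ → ℝ → ℝ} (hK : ContDiff ℝ (⊤ : ℕ∞) fun p : ℝ × ℝ => K p.1 p.2) (r w : ℝ) :
    HasDerivAt (fun y => K r y) (fderiv ℝ (fun p : ℝ × ℝ => K p.1 p.2) (r, w) (0, 1)) w := by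
  have h1 : HasDerivAt (fun y : ℝ => (r, y)) ((0 : ℝ), (1 : ℝ)) w :=
    (hasDerivAt_const w r).prodMk (hasDerivAt_id w)
  exact ((hK.differentiable (by simp) (r, w)).hasFDerivAt.comp_hasDerivAt w h1)

lemma pr_eq {K : ℝ → ℝ → ℝ} (hK : ContDiff ℝ (⊤ : ℕ∞) fun p : ℝ × ℝ => K p.1 p.2) (r w : ℝ) :
    pr K r w = fderiv ℝ (fun p : ℝ × ℝ => K p.1 p.2) (r, w) (1, 0) :=
  (slice1 hK r w).deriv

lemma pw_eq {K : ℝ → ℝ → ℝ} (hK : ContDiff ℝ (⊤ : ℕ∞) fun p : ℝ × ℝ => K p.1 p.2) (r w : ℝ) :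
    pw K r w = fderiv ℝ (fun p : ℝ × ℝ => K p.1 p.2) (r, w) (0, 1) :=
  (slice2 hK r w).deriv

lemma hasDerivAt_pr {K : ℝ → ℝ → ℝ} (hK : ContDiff ℝ (⊤ : ℕ∞) fun p : ℝ × ℝ => K p.1 p.2) (r w : ℝ) :
    HasDerivAt (fun x => K x w) (pr K r w) r := by
  rw [pr_eq hK r w]; exact slice1 hK r w

lemma hasDerivAt_pw {K : ℝ → ℝ → ℝ} (hK : ContDiff ℝ (⊤ : ℕ∞) fun p : ℝ × ℝ => K p.1 p.2) (r w : ℝ) :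
    HasDerivAt (fun y => K r y) (pw K r w) w := by
  rw [pw_eq hK r w]; exact slice2 hK r w

lemma contDiff_pr {K : ℝ → ℝ → ℝ} (hK : ContDiff ℝ (⊤ : ℕ∞) fun p : ℝ × ℝ => K p.1 p.2) :
    ContDiff ℝ (⊤ : ℕ∞) fun p : ℝ × ℝ => pr K p.1 p.2 := by
  have e : (fun p : ℝ × ℝ => pr K p.1 p.2)
      = fun p => fderiv ℝ (fun p : ℝ × ℝ => K p.1 p.2) p (1, 0) :=
    funext fun p => pr_eq hK p.1 p.2
  rw [e]
  exact (hK.fderiv_right (by simp)).clm_apply contDiff_const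

lemma contDiff_pw {K : ℝ → ℝ → ℝ} (hK : ContDiff ℝ (⊤ : ℕ∞) fun p : ℝ × ℝ => K p.1 p.2) :
    ContDiff ℝ (⊤ : ℕ∞) fun p : ℝ × ℝ => pw K p.1 p.2 := by
  have e : (fun p : ℝ × ℝ => pw K p.1 p.2)
      = fun p => fderiv ℝ (fun p : ℝ × ℝ => K p.1 p.2) p (0, 1) :=
    funext fun p => pw_eq hK p.1 p.2
  rw [e]
  exact (hK.fderiv_right (by simp)).clm_apply contDiff_const

lemma pw_pr_comm {K : ℝ → ℝ → ℝ} (hK : ContDiff ℝ (⊤ : ℕ∞) fun p : ℝ × ℝ => K p.1 p.2) (r w : ℝ) :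
    pw (pr K) r w = pr (pw K) r w := by
  set F : ℝ × ℝ → ℝ := fun p => K p.1 p.2 with hF
  have hdF : ContDiff ℝ (⊤ : ℕ∞) (fderiv ℝ F) := hK.fderiv_right (by simp)
  have hc : DifferentiableAt ℝ (fderiv ℝ F) (r, w) := (hdF.differentiable (by simp)) (r, w)
  have hf : ∀ p, HasFDerivAt F (fderiv ℝ F p) p := fun p => ((hK.differentiable (by simp)) p).hasFDerivAt
  have hsymm := second_derivative_symmetric hf hc.hasFDerivAt ((0:ℝ), (1:ℝ)) ((1:ℝ), (0:ℝ))
  have e1 : ∀ u : ℝ × ℝ, fderiv ℝ (fun p => fderiv ℝ F p u) (r, w)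
      = (fderiv ℝ (fderiv ℝ F) (r, w)).flip u := by
    intro u
    rw [fderiv_clm_apply hc (differentiableAt_const u)]
    simp
  have h1 : pw (pr K) r w = fderiv ℝ (fun p => fderiv ℝ F p ((1:ℝ), (0:ℝ))) (r, w) (0, 1) := by
    have hG : ContDiff ℝ (⊤ : ℕ∞) fun p : ℝ × ℝ => fderiv ℝ F p ((1:ℝ), (0:ℝ)) :=
      hdF.clm_apply contDiff_const
    have e : (fun y => pr K r y) = fun y => fderiv ℝ F (r, y) ((1:ℝ), (0:ℝ)) :=
      funext fun y => pr_eq hK r y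
    show deriv (fun y => pr K r y) w = _
    rw [e]
    exact (slice2 (K := fun a b => fderiv ℝ F (a, b) ((1:ℝ), (0:ℝ))) hG r w).deriv
  have h2 : pr (pw K) r w = fderiv ℝ (fun p => fderiv ℝ F p ((0:ℝ), (1:ℝ))) (r, w) (1, 0) := by
    have hG : ContDiff ℝ (⊤ : ℕ∞) fun p : ℝ × ℝ => fderiv ℝ F p ((0:ℝ), (1:ℝ)) :=
      hdF.clm_apply contDiff_const
    have e : (fun x => pw K x w) = fun x => fderiv ℝ F (x, w) ((0:ℝ), (1:ℝ)) :=
      funext fun x => pw_eq hK x w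
    show deriv (fun x => pw K x w) r = _
    rw [e]
    exact (slice1 (K := fun a b => fderiv ℝ F (a, b) ((0:ℝ), (1:ℝ))) hG r w).deriv
  rw [h1, h2, e1, e1]
  simpa using hsymm

lemma quadDeriv (p q s x : ℝ) : HasDerivAt (fun t => p * t ^ 2 + q * t + s) (2 * p * x + q) x := by
  have h := ((((hasDerivAt_pow 2 x).const_mul p).fun_add ((hasDerivAt_id x).const_mul q)).add_const s)
  refine h.congr_deriv ?_
  push_cast
  ring

lemma linDeriv (p q x : ℝ) : HasDerivAt (fun t => p * t + q) p x := by
  have h := ((hasDerivAt_id x).const_mul p).add_const q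
  refine h.congr_deriv ?_
  ring


set_option maxHeartbeats 1000000 in
/-- for a driven qLN system the substitution `k = K·det(A)` transforms
the driven condition `∂₁((-A₁₂∂₁k + A₁₁∂₂k)/det A) = 0` into the hyperbolic PDE
`A₁₂·∂₁₁K - A₁₁·∂₁₂K - (3/2)·∂₂A₁₁·∂₁K = 0` (the fundamental equation for the pair
`(A, diag(0,1/2))`). -/
theorem stmt_17 (a b c al be ga : ℝ)
    (A11 : ℝ → ℝ) (A12 : ℝ → ℝ → ℝ) (A22 : ℝ → ℝ)
    (hA11 : A11 = fun w => a * w ^ 2 + b * w + al)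
    (hA12 : A12 = fun r w => (-2 * a * r * w - b * r - c * w + be) / 2)
    (hA22 : A22 = fun r => a * r ^ 2 + c * r + ga)
    (hA11ne : ∀ w, A11 w ≠ 0)
    (hdet : ∀ r w, A11 w * A22 r - A12 r w ^ 2 ≠ 0)
    (K k : ℝ → ℝ → ℝ)
    (hK : ContDiff ℝ (⊤ : ℕ∞) fun p : ℝ × ℝ => K p.1 p.2)
    (hk : k = fun r w => K r w * (A11 w * A22 r - A12 r w ^ 2)) :
    (∀ r w, pr (fun r' w' =>
        (-(A12 r' w') * pr k r' w' + A11 w' * pw k r' w')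
          / (A11 w' * A22 r' - A12 r' w' ^ 2)) r w = 0)
    ↔ (∀ r w, A12 r w * pr (pr K) r w - A11 w * pw (pr K) r w
        - (3/2) * deriv A11 w * pr K r w = 0) := by
  subst hA11 hA12 hA22 hk
  beta_reduce at hdet ⊢
  have hfun : (fun r' w' =>
        (-((-2 * a * r' * w' - b * r' - c * w' + be) / 2) * pr (fun r w =>
        K r w *
          ((a * w ^ 2 + b * w + al) * (a * r ^ 2 + c * r + ga) -
            ((-2 * a * r * w - b * r - c * w + be) / 2) ^ 2)) r' w' +
            (a * w' ^ 2 + b * w' + al) * pw (fun r w =>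
        K r w *
          ((a * w ^ 2 + b * w + al) * (a * r ^ 2 + c * r + ga) -
            ((-2 * a * r * w - b * r - c * w + be) / 2) ^ 2)) r' w') /
          ((a * w' ^ 2 + b * w' + al) * (a * r' ^ 2 + c * r' + ga) -
            ((-2 * a * r' * w' - b * r' - c * w' + be) / 2) ^ 2)) = (fun r' w' =>
        -((-2 * a * r' * w' - b * r' - c * w' + be) / 2) * pr K r' w' +
          (a * w' ^ 2 + b * w' + al) * pw K r' w' + K r' w' * (2 * a * w' + b)) := by
    funext r w
    have hKr := hasDerivAt_pr hK r w
    have hKw := hasDerivAt_pw hK r w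
    have h2 : HasDerivAt (fun x : ℝ => (-2 * a * x * w - b * x - c * w + be) / 2)
        ((-2 * a * w - b) / 2) r := by
      have e : (fun x : ℝ => (-2 * a * x * w - b * x - c * w + be) / 2)
          = fun x => ((-2 * a * w - b) / 2) * x + (-c * w + be) / 2 := by funext x; ring
      rw [e]; exact linDeriv _ _ r
    have h2w : HasDerivAt (fun y : ℝ => (-2 * a * r * y - b * r - c * y + be) / 2)
        ((-2 * a * r - c) / 2) w := by
      have e : (fun y : ℝ => (-2 * a * r * y - b * r - c * y + be) / 2)
          = fun y => ((-2 * a * r - c) / 2) * y + (-b * r + be) / 2 := by funext y; ring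
      rw [e]; exact linDeriv _ _ w
    have hDr := ((quadDeriv a c ga r).const_mul (a * w ^ 2 + b * w + al)).fun_sub (h2.fun_pow 2)
    have hDw := ((quadDeriv a b al w).mul_const (a * r ^ 2 + c * r + ga)).fun_sub (h2w.fun_pow 2)
    have hprk : pr (fun r w =>
        K r w *
          ((a * w ^ 2 + b * w + al) * (a * r ^ 2 + c * r + ga) -
            ((-2 * a * r * w - b * r - c * w + be) / 2) ^ 2)) r w = _ := (hKr.fun_mul hDr).deriv
    have hpwk : pw (fun r w =>
        K r w *
          ((a * w ^ 2 + b * w + al) * (a * r ^ 2 + c * r + ga) -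
            ((-2 * a * r * w - b * r - c * w + be) / 2) ^ 2)) r w = _ := (hKw.fun_mul hDw).deriv
    rw [hprk, hpwk]
    rw [div_eq_iff (hdet r w)]
    ring
  rw [hfun]
  have hprN : ∀ r w : ℝ, pr (fun r' w' =>
        -((-2 * a * r' * w' - b * r' - c * w' + be) / 2) * pr K r' w' +
          (a * w' ^ 2 + b * w' + al) * pw K r' w' + K r' w' * (2 * a * w' + b)) r w = _ := fun r w => by
    have h2 : HasDerivAt (fun x : ℝ => (-2 * a * x * w - b * x - c * w + be) / 2)
        ((-2 * a * w - b) / 2) r := by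
      have e : (fun x : ℝ => (-2 * a * x * w - b * x - c * w + be) / 2)
          = fun x => ((-2 * a * w - b) / 2) * x + (-c * w + be) / 2 := by funext x; ring
      rw [e]; exact linDeriv _ _ r
    exact (((h2.fun_neg.fun_mul (hasDerivAt_pr (contDiff_pr hK) r w)).fun_add
      ((hasDerivAt_pr (contDiff_pw hK) r w).const_mul (a * w ^ 2 + b * w + al))).fun_add
      ((hasDerivAt_pr hK r w).mul_const (2 * a * w + b))).deriv
  constructor
  · intro h r w
    have h0 := h r w
    rw [hprN r w] at h0
    rw [(quadDeriv a b al w).deriv]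
    rw [← pw_pr_comm hK r w] at h0
    linear_combination -h0
  · intro h r w
    have h0 := h r w
    rw [(quadDeriv a b al w).deriv] at h0
    rw [hprN r w, ← pw_pr_comm hK r w]
    linear_combination -h0
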